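/- arXiv:1401.5516 — 2 statements merged into one kernel-verified Lean document; each statement's English description precedes it below -/
import Mathlib

section
/- On the round 3-sphere S^3 ⊂ R^4, the Hopf fields u_1 = (−y, x, w, −z)|_{S^3} and u_2 = (−y, x, −w, z)|_{S^3} satisfy u_1 × u_2 = −∇F, where F = (x² + y²)|_{S^3}, × is the vector product and ∇ the gradient on S^3 with respect to the round metric. -/
/-!
The volume form of `S³` at `p` is `μ_p(a, b, c) = det(a, b, c, p)`, the outward normal `p`
appended, and the intrinsic gradient of `F = x² + y²` is the tangential projection
`∇F = E - (E·p) p` of the ambient gradient `E = (2x, 2y, 0, 0)`, where `E·p = 2F`.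
Coordinates: `p 0 = x`, `p 1 = y`, `p 2 = z`, `p 3 = w`.

Expanding the determinant gives, for all `p v ∈ ℝ⁴`, the polynomial identity
`det(u₁, u₂, v, p) = 2F ⟨p, v⟩ - |p|² ⟨E, v⟩`. On the unit sphere its right-hand side is
`⟨-E + 2F p, v⟩ = ⟨-∇F, v⟩`.
-/

noncomputable section

abbrev E4 := Fin 4 → ℝ

def vol4 : AlternatingMap ℝ E4 ℝ (Fin 4) := Matrix.detRowAlternating

theorem Matrix.det_fin_four {R : Type*} [CommRing R] (A : Matrix (Fin 4) (Fin 4) R) :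
    A.det =
      A 0 0 * (A 1 1 * (A 2 2 * A 3 3 - A 2 3 * A 3 2) - A 1 2 * (A 2 1 * A 3 3 - A 2 3 * A 3 1)
          + A 1 3 * (A 2 1 * A 3 2 - A 2 2 * A 3 1))
      - A 0 1 * (A 1 0 * (A 2 2 * A 3 3 - A 2 3 * A 3 2) - A 1 2 * (A 2 0 * A 3 3 - A 2 3 * A 3 0)
          + A 1 3 * (A 2 0 * A 3 2 - A 2 2 * A 3 0))
      + A 0 2 * (A 1 0 * (A 2 1 * A 3 3 - A 2 3 * A 3 1) - A 1 1 * (A 2 0 * A 3 3 - A 2 3 * A 3 0)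
          + A 1 3 * (A 2 0 * A 3 1 - A 2 1 * A 3 0))
      - A 0 3 * (A 1 0 * (A 2 1 * A 3 2 - A 2 2 * A 3 1) - A 1 1 * (A 2 0 * A 3 2 - A 2 2 * A 3 0)
          + A 1 2 * (A 2 0 * A 3 1 - A 2 1 * A 3 0)) := by
  rw [Matrix.det_succ_row_zero]
  simp only [Fin.sum_univ_four, Matrix.det_fin_three]
  simp [Fin.succAbove, Fin.lt_def]
  ring

theorem vol4_hopf_fields (p v : E4) :
    vol4 ![![-p 1, p 0, p 3, -p 2], ![-p 1, p 0, -p 3, p 2], v, p] =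
      2 * (p 0 ^ 2 + p 1 ^ 2) * ∑ i, p i * v i
        - (∑ i, p i ^ 2) * (2 * p 0 * v 0 + 2 * p 1 * v 1) := by
  change (Matrix.of ![![-p 1, p 0, p 3, -p 2], ![-p 1, p 0, -p 3, p 2], v, p]).det = _
  rw [Matrix.det_fin_four]
  simp only [Matrix.of_apply, Matrix.cons_val', Matrix.cons_val_zero, Matrix.cons_val_fin_one,
    Matrix.cons_val_one, Matrix.cons_val, Fin.sum_univ_four]
  ring

theorem stmt9 (p : E4) (hp : p 0 ^ 2 + p 1 ^ 2 + p 2 ^ 2 + p 3 ^ 2 = 1)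
    (u₁ u₂ : E4) (hu₁ : u₁ = ![-p 1, p 0, p 3, -p 2]) (hu₂ : u₂ = ![-p 1, p 0, -p 3, p 2])
    (F : ℝ) (hF : F = p 0 ^ 2 + p 1 ^ 2)
    (gradF : E4) (hgradF : gradF = fun i => (![2 * p 0, 2 * p 1, 0, 0] : E4) i - 2 * F * p i) :
    -- (u₁ × u₂, v) = μ(u₁, u₂, v) = (-∇F, v) for every tangent vector v:
    ∀ v : E4, (∑ i, v i * p i) = 0 →
      vol4 ![u₁, u₂, v, p] = ∑ i, (-gradF i) * v i := by
  intro v _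
  subst hu₁ hu₂ hF hgradF
  rw [vol4_hopf_fields]
  simp only [Fin.sum_univ_four, Matrix.cons_val_zero, Matrix.cons_val_one, Matrix.cons_val] at hp ⊢
  linear_combination (-(2 * p 0 * v 0 + 2 * p 1 * v 1)) * hp
end
end

section
/- Suppose the vorticity of a smooth solution u(t) of the Euler equation on a closed Riemannian 3-manifold is transported by the flow: rot u(t) = (S_0^t)_* rot u(0), where S_0^t : M → M are volume-preserving diffeomorphisms. Then for every t, the measure of the union of ergodic invariant 2-tori of rot u(t) in a fixed isotopy class a equals that for rot u(0): κ_a(rot u(t)) = κ_a(rot u(0)). -/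
/-!
STATEMENT 19: Suppose the vorticity of a smooth Euler solution on a closed Riemannian
3-manifold `M` is transported by the flow: `rot u(t) = (S₀ᵗ)_* rot u(0)` with `S₀ᵗ`
volume-preserving diffeomorphisms (isotopic to the identity, being a flow from the
identity). Then `κ_a(rot u(t)) = κ_a(rot u(0))` for every isotopy class `a` of
embedded 2-tori, where `κ_a(V)` is the inner measure of the union of all ergodic
`V`-invariant 2-tori in the class `a`.
Vector fields are represented by their flows: `φ` is the flow of `rot u(0)`, `Φ`
stands for `S₀ᵗ`, and the flow `ψ` of `rot u(t) = Φ_* rot u(0)` is the conjugated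
flow `ψ_s = Φ ∘ φ_s ∘ Φ⁻¹`. The isotopy class `a` is represented by a reference
torus `Ta`.
-/

open MeasureTheory
open scoped ENNReal

noncomputable section

variable {M : Type*}

/-- `T` is invariant under the flow `φ`. -/
def FlowInvariant (φ : ℝ → M → M) (T : Set M) : Prop := ∀ x ∈ T, ∀ t : ℝ, φ t x ∈ T

/-- `T` is an ergodic invariant 2-torus of the flow `φ`: an invariant subset
homeomorphic to the 2-torus, on which the flow has no rest points and some
trajectory is dense. -/
def IsErgodicTorus [TopologicalSpace M] (φ : ℝ → M → M) (T : Set M) : Prop :=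
  FlowInvariant φ T ∧ Nonempty (↥T ≃ₜ (AddCircle (1 : ℝ) × AddCircle (1 : ℝ))) ∧
    (∀ x ∈ T, ∃ t : ℝ, φ t x ≠ x) ∧
    ∃ x ∈ T, T ⊆ closure (Set.range fun t => φ t x)

/-- `T₁` is (ambient) isotopic to `T₀`: there is a continuous family of
homeomorphisms starting at the identity and carrying `T₀` to `T₁`. -/
def IsotopicTo [TopologicalSpace M] (T₀ T₁ : Set M) : Prop :=
  ∃ Θ : ℝ → M ≃ₜ M, Continuous (fun q : ℝ × M => Θ q.1 q.2) ∧
    Θ 0 = Homeomorph.refl M ∧ (Θ 1) '' T₀ = T₁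

/-- The union of all ergodic invariant tori of `φ` in the isotopy class of `Ta`. -/
def ergTorusUnion [TopologicalSpace M] (φ : ℝ → M → M) (Ta : Set M) : Set M :=
  ⋃₀ {T : Set M | IsErgodicTorus φ T ∧ IsotopicTo Ta T}

/-- Inner measure of a set. -/
def innerMeas [TopologicalSpace M] [MeasurableSpace M] (μm : Measure M) (s : Set M) :
    ℝ≥0∞ :=
  ⨆ (K : Set M) (_ : IsCompact K ∧ K ⊆ s), μm K

/-- `κ_a`: the inner measure of the union of ergodic invariant tori in the isotopy
class `a` (represented by the reference torus `Ta`). -/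
def kappa [TopologicalSpace M] [MeasurableSpace M] (μm : Measure M)
    (φ : ℝ → M → M) (Ta : Set M) : ℝ≥0∞ :=
  innerMeas μm (ergTorusUnion φ Ta)

/-!
Conjugation by `Φ` carries the ergodic invariant tori of `φ` bijectively onto those of
`ψ`. Since `Φ` is isotopic to the identity, `T` and `Φ '' T` lie in the same isotopy class,
so `Φ` maps the union of tori for `φ` in the class `a` onto the one for `ψ`; and a
homeomorphism preserving the measure of compact sets preserves inner measure.
-/

namespace IsotopicTo

variable [TopologicalSpace M] {T₀ T₁ T₂ : Set M}

/-- Inverting each `Θ s` need not give a jointly continuous family; running `Θ` backwards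
and composing with `(Θ 1)⁻¹` does. -/
theorem symm (h : IsotopicTo T₀ T₁) : IsotopicTo T₁ T₀ := by
  obtain ⟨Θ, hΘc, hΘ0, hΘ1⟩ := h
  refine ⟨fun s => (Θ (1 - s)).trans (Θ 1).symm, ?_, ?_, ?_⟩
  · exact (Θ 1).symm.continuous.comp
      (hΘc.comp ((continuous_const.sub continuous_fst).prodMk continuous_snd))
  · ext x
    simp
  · simp [hΘ0, ← hΘ1, Set.image_image]

/-- The two isotopies are run simultaneously, `s ↦ Ξ s ∘ Θ s`, so no reparametrisation
is needed. -/
theorem trans (h₀₁ : IsotopicTo T₀ T₁) (h₁₂ : IsotopicTo T₁ T₂) : IsotopicTo T₀ T₂ := by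
  obtain ⟨Θ, hΘc, hΘ0, hΘ1⟩ := h₀₁
  obtain ⟨Ξ, hΞc, hΞ0, hΞ1⟩ := h₁₂
  refine ⟨fun s => (Θ s).trans (Ξ s), ?_, ?_, ?_⟩
  · exact hΞc.comp (continuous_fst.prodMk hΘc)
  · show (Θ 0).trans (Ξ 0) = _
    rw [hΘ0, hΞ0]
    rfl
  · simp only [← hΞ1, ← hΘ1, Set.image_image]
    rfl

end IsotopicTo

theorem isotopicTo_image_iff [TopologicalSpace M] {Φ : M ≃ₜ M}
    (hΦ : ∀ T, IsotopicTo T (Φ '' T)) {T₀ T : Set M} :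
    IsotopicTo T₀ (Φ '' T) ↔ IsotopicTo T₀ T :=
  ⟨fun h => h.trans (hΦ T).symm, fun h => h.trans (hΦ T)⟩

section Conjugation

variable {N : Type*} [TopologicalSpace M] [TopologicalSpace N] {Φ : M ≃ₜ N}
  {φ : ℝ → M → M} {ψ : ℝ → N → N}

theorem FlowInvariant.image (hψ : ∀ t x, ψ t x = Φ (φ t (Φ.symm x))) {T : Set M}
    (h : FlowInvariant φ T) : FlowInvariant ψ (Φ '' T) := by
  rintro _ ⟨y, hy, rfl⟩ t
  rw [hψ, Φ.symm_apply_apply]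
  exact Set.mem_image_of_mem Φ (h y hy t)

theorem IsErgodicTorus.image (hψ : ∀ t x, ψ t x = Φ (φ t (Φ.symm x))) {T : Set M}
    (h : IsErgodicTorus φ T) : IsErgodicTorus ψ (Φ '' T) := by
  obtain ⟨hinv, ⟨e⟩, hmoving, x, hxT, hdense⟩ := h
  have horbit : (fun t => ψ t (Φ x)) = Φ ∘ fun t => φ t x := by
    funext t
    rw [hψ, Φ.symm_apply_apply, Function.comp_apply]
  refine ⟨hinv.image hψ, ⟨(Φ.image T).symm.trans e⟩, ?_, Φ x, ⟨x, hxT, rfl⟩, ?_⟩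
  · rintro _ ⟨y, hy, rfl⟩
    obtain ⟨t, ht⟩ := hmoving y hy
    exact ⟨t, by rwa [hψ, Φ.symm_apply_apply, Φ.injective.ne_iff]⟩
  · rw [horbit, Set.range_comp]
    exact (Set.image_mono hdense).trans (image_closure_subset_closure_image Φ.continuous)

theorem isErgodicTorus_image_iff (hψ : ∀ t x, ψ t x = Φ (φ t (Φ.symm x))) {T : Set M} :
    IsErgodicTorus ψ (Φ '' T) ↔ IsErgodicTorus φ T := by
  refine ⟨fun h => ?_, IsErgodicTorus.image hψ⟩
  have hφ : ∀ t x, φ t x = Φ.symm (ψ t (Φ.symm.symm x)) := by simp [hψ]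
  simpa [Set.image_image] using h.image hφ

end Conjugation

theorem ergTorusUnion_conj [TopologicalSpace M] {Φ : M ≃ₜ M}
    (hΦ : ∀ T, IsotopicTo T (Φ '' T)) {φ ψ : ℝ → M → M}
    (hψ : ∀ t x, ψ t x = Φ (φ t (Φ.symm x))) (Ta : Set M) :
    ergTorusUnion ψ Ta = Φ '' ergTorusUnion φ Ta := by
  ext x
  constructor
  · rintro ⟨T, ⟨herg, hiso⟩, hxT⟩
    have hT : Φ '' (Φ.symm '' T) = T := by simp [Set.image_image]
    rw [← hT] at herg hiso
    refine ⟨Φ.symm x, ⟨Φ.symm '' T, ?_, x, hxT, rfl⟩, Φ.apply_symm_apply x⟩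
    exact ⟨(isErgodicTorus_image_iff hψ).1 herg, (isotopicTo_image_iff hΦ).1 hiso⟩
  · rintro ⟨y, ⟨T, ⟨herg, hiso⟩, hyT⟩, rfl⟩
    exact ⟨Φ '' T, ⟨herg.image hψ, (isotopicTo_image_iff hΦ).2 hiso⟩, y, hyT, rfl⟩

section InnerMeasure

variable {N : Type*} [TopologicalSpace M] [MeasurableSpace M] [TopologicalSpace N]
  [MeasurableSpace N] {μ : Measure M} {ν : Measure N}

theorem innerMeas_le_innerMeas_image {f : M → N} (hf : Continuous f)
    (hμν : ∀ K, IsCompact K → μ K ≤ ν (f '' K)) (s : Set M) :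
    innerMeas μ s ≤ innerMeas ν (f '' s) :=
  iSup₂_le fun K ⟨hK, hKs⟩ =>
    (hμν K hK).trans (le_iSup₂_of_le (f '' K) ⟨hK.image hf, Set.image_mono hKs⟩ le_rfl)

theorem innerMeas_image {Φ : M ≃ₜ N} (hΦ : ∀ K, IsCompact K → ν (Φ '' K) = μ K)
    (s : Set M) : innerMeas ν (Φ '' s) = innerMeas μ s := by
  refine le_antisymm ?_ (innerMeas_le_innerMeas_image Φ.continuous (fun K hK => (hΦ K hK).ge) s)
  have hΦsymm : ∀ K, IsCompact K → ν K ≤ μ (Φ.symm '' K) := fun K hK => by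
    rw [← hΦ _ (hK.image Φ.symm.continuous), Set.image_image]
    simp
  simpa [Set.image_image] using innerMeas_le_innerMeas_image Φ.symm.continuous hΦsymm (Φ '' s)

end InnerMeasure

theorem stmt19_general {M : Type*} [TopologicalSpace M] [T2Space M]
    [MeasurableSpace M] [OpensMeasurableSpace M]
    (μm : Measure M)
    -- the flow φ of rot u(0):
    (φ : ℝ → M → M)
    -- Φ = S₀ᵗ: a volume-preserving homeomorphism isotopic to the identity:
    (Φ : M ≃ₜ M)
    (hΦmp : ∀ A : Set M, MeasurableSet A → μm (⇑Φ '' A) = μm A)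
    (hΦiso : ∃ Θ : ℝ → M ≃ₜ M, Continuous (fun q : ℝ × M => Θ q.1 q.2) ∧
      Θ 0 = Homeomorph.refl M ∧ Θ 1 = Φ)
    -- ψ: the flow of the transported field rot u(t) = Φ_* rot u(0):
    (ψ : ℝ → M → M) (hψ : ∀ t x, ψ t x = Φ (φ t (Φ.symm x)))
    -- the reference torus of the isotopy class a:
    (Ta : Set M) :
    kappa μm ψ Ta = kappa μm φ Ta := by
  have hΦT : ∀ T, IsotopicTo T (Φ '' T) := by
    obtain ⟨Θ, hΘc, hΘ0, rfl⟩ := hΦiso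
    exact fun T => ⟨Θ, hΘc, hΘ0, rfl⟩
  have hΦK : ∀ K, IsCompact K → μm (Φ '' K) = μm K :=
    fun K hK => hΦmp K hK.isClosed.measurableSet
  rw [kappa, kappa, ergTorusUnion_conj hΦT hψ, innerMeas_image hΦK]

theorem stmt19 {M : Type*} [TopologicalSpace M] [T2Space M]
    [MeasurableSpace M] [OpensMeasurableSpace M]
    (μm : Measure M) (hμ1 : μm Set.univ = 1)
    -- the flow φ of rot u(0):
    (φ : ℝ → M → M) (hφ0 : ∀ x, φ 0 x = x)
    (hφadd : ∀ s t x, φ (s + t) x = φ s (φ t x))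
    -- Φ = S₀ᵗ: a volume-preserving homeomorphism isotopic to the identity:
    (Φ : M ≃ₜ M)
    (hΦmp : ∀ A : Set M, MeasurableSet A → μm (⇑Φ '' A) = μm A)
    (hΦiso : ∃ Θ : ℝ → M ≃ₜ M, Continuous (fun q : ℝ × M => Θ q.1 q.2) ∧
      Θ 0 = Homeomorph.refl M ∧ Θ 1 = Φ)
    -- ψ: the flow of the transported field rot u(t) = Φ_* rot u(0):
    (ψ : ℝ → M → M) (hψ : ∀ t x, ψ t x = Φ (φ t (Φ.symm x)))
    -- the reference torus of the isotopy class a: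
    (Ta : Set M) :
    kappa μm ψ Ta = kappa μm φ Ta :=
  stmt19_general μm φ Φ hΦmp hΦiso ψ hψ Ta
end
end
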